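/- Let φ : ℂ* → ℂ* be a conjugating mapping (a bijection such that for every holomorphic f : ℂ* → ℂ* the map φ ∘ f ∘ φ⁻¹ is holomorphic) with φ(1) = 1, and suppose there exists c ∈ ℂ* such that φ(exp(w)) = exp(c·φ(w)) for all w ∈ ℂ*. Define φ̃ : ℂ → ℂ by φ̃(0) = 0 and φ̃(z) = φ(z) for z ≠ 0. Then φ̃ is additive: φ̃(a + b) = φ̃(a) + φ̃(b) for all a, b ∈ ℂ. -/

import Mathlib

open Complex Set

noncomputable section

noncomputable section

/-- The punctured complex line `ℂ* = ℂ ∖ {0}`. -/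
def Cstar : Set ℂ := {z : ℂ | z ≠ 0}

/-- A holomorphic self-map of `ℂ*` (represented by a total function whose behaviour
matters only on `ℂ*`). -/
def CstarEndo (f : ℂ → ℂ) : Prop :=
  DifferentiableOn ℂ f Cstar ∧ Set.MapsTo f Cstar Cstar

/-- A conjugating mapping of `ℂ*`: a bijection of `ℂ*` such that for every holomorphic
self-map `f` of `ℂ*` the conjugate `φ ∘ f ∘ φ⁻¹` is again a holomorphic self-map of `ℂ*`
(expressed as: there is a holomorphic self-map `g` with `g ∘ φ = φ ∘ f` on `ℂ*`). -/
def ConjugatingCstar (φ : ℂ → ℂ) : Prop :=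
  Set.BijOn φ Cstar Cstar ∧
    ∀ f, CstarEndo f → ∃ g, CstarEndo g ∧ ∀ z ∈ Cstar, g (φ z) = φ (f z)

/-- The extension `φ̃ : ℂ → ℂ` of `φ` by `φ̃(0) = 0`. -/
def extZero (φ : ℂ → ℂ) : ℂ → ℂ := fun z => if z = 0 then 0 else φ z

section Aux

open Filter Topology Metric Function Real

lemma isOpen_Cstar : IsOpen Cstar := isOpen_compl_singleton

lemma mem_Cstar {z : ℂ} (h : z ≠ 0) : z ∈ Cstar := h

lemma an_at {G : ℂ → ℂ} (hd : DifferentiableOn ℂ G Cstar) {z : ℂ} (hz : z ≠ 0) :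
    AnalyticAt ℂ G z :=
  hd.analyticAt (isOpen_Cstar.mem_nhds hz)

lemma diff_at {G : ℂ → ℂ} (hd : DifferentiableOn ℂ G Cstar) {z : ℂ} (hz : z ≠ 0) :
    DifferentiableAt ℂ G z := (an_at hd hz).differentiableAt

lemma nhds_le_map {G : ℂ → ℂ} (hd : DifferentiableOn ℂ G Cstar) (hinj : InjOn G Cstar)
    {z0 : ℂ} (hz0 : z0 ≠ 0) : 𝓝 (G z0) ≤ map G (𝓝 z0) := by
  rcases (an_at hd hz0).eventually_constant_or_nhds_le_map_nhds with hc | h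
  · exfalso
    rcases Metric.eventually_nhds_iff.1 hc with ⟨ε, hε, hball⟩
    have hz0n : 0 < ‖z0‖ := norm_pos_iff.2 hz0
    set δ : ℝ := min ε ‖z0‖ / 2 with hδdef
    have hmin : 0 < min ε ‖z0‖ := lt_min hε hz0n
    have hδpos : 0 < δ := by rw [hδdef]; linarith
    have hδε : δ < ε := by
      have h1 : min ε ‖z0‖ ≤ ε := min_le_left _ _
      rw [hδdef]; linarith
    have hδz : δ ≤ ‖z0‖ / 2 := by
      have h1 : min ε ‖z0‖ ≤ ‖z0‖ := min_le_right _ _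
      rw [hδdef]; linarith
    set z1 : ℂ := z0 + (δ : ℂ) with hz1def
    have hδC : ‖(δ : ℂ)‖ = δ := by
      rw [Complex.norm_real, Real.norm_eq_abs, abs_of_pos hδpos]
    have hne : z1 ≠ z0 := by
      rw [hz1def]
      intro h
      have : (δ : ℂ) = 0 := by linear_combination h
      exact hδpos.ne' (by exact_mod_cast this)
    have hz1ne : z1 ≠ 0 := by
      intro h
      have hz0eq : z0 = -(δ : ℂ) := by rw [hz1def] at h; linear_combination h
      have : ‖z0‖ = δ := by rw [hz0eq, norm_neg, hδC]
      linarith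
    have hd1 : dist z1 z0 < ε := by
      rw [dist_eq_norm, hz1def, add_sub_cancel_left, hδC]
      exact hδε
    exact hne (hinj hz1ne hz0 (hball hd1))
  · exact h

lemma ball_sub_image {G : ℂ → ℂ} (hd : DifferentiableOn ℂ G Cstar) (hinj : InjOn G Cstar)
    {z0 : ℂ} (hz0 : z0 ≠ 0) {ρ : ℝ} (hρ : 0 < ρ) :
    ∃ ε > 0, ball (G z0) ε ⊆ G '' ball z0 ρ := by
  have h1 : G '' ball z0 ρ ∈ map G (𝓝 z0) := image_mem_map (ball_mem_nhds _ hρ)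
  rcases Metric.mem_nhds_iff.1 (nhds_le_map hd hinj hz0 h1) with ⟨ε, hε, hsub⟩
  exact ⟨ε, hε, hsub⟩

lemma dichotomy {G : ℂ → ℂ} (hd : DifferentiableOn ℂ G Cstar) (hmap : MapsTo G Cstar Cstar)
    (hinj : InjOn G Cstar) :
    (∃ L, Tendsto G (𝓝[≠] (0 : ℂ)) (𝓝 L)) ∨
      Tendsto (fun z => (G z)⁻¹) (𝓝[≠] (0 : ℂ)) (𝓝 0) := by
  have h2 : (2 : ℂ) ≠ 0 := two_ne_zero
  obtain ⟨ε, hε, hsub⟩ := ball_sub_image hd hinj h2 (ρ := 1/2) (by norm_num)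
  set b := G 2 with hb
  have key : ∀ z : ℂ, z ≠ 0 → ‖z‖ < 1 → ε ≤ ‖G z - b‖ := by
    intro z hz hz1
    by_contra hlt
    push_neg at hlt
    have hmem : G z ∈ ball b ε := by rwa [mem_ball, dist_eq_norm]
    obtain ⟨w, hw, hGw⟩ := hsub hmem
    have hdw : ‖(2 : ℂ) - w‖ < 1/2 := by
      have := mem_ball.1 hw
      rwa [dist_eq_norm, norm_sub_rev] at this
    have h2n : ‖(2 : ℂ)‖ = 2 := by norm_num
    have hwn : (3 : ℝ)/2 < ‖w‖ := by
      have := norm_sub_norm_le (2 : ℂ) w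
      rw [h2n] at this
      linarith
    have hw0 : w ≠ 0 := by
      intro h; rw [h, norm_zero] at hwn; linarith
    have := hinj hw0 hz hGw
    rw [← this] at hz1
    linarith
  set q : ℂ → ℂ := fun z => (G z - b)⁻¹ with hq
  have hball1 : ∀ᶠ z in 𝓝 (0 : ℂ), ‖z‖ < 1 := by
    filter_upwards [Metric.ball_mem_nhds (0 : ℂ) one_pos] with z hz
    simpa [dist_zero_right] using hz
  have hev : ∀ᶠ z in 𝓝[≠] (0 : ℂ), z ≠ 0 ∧ ‖z‖ < 1 := by
    filter_upwards [self_mem_nhdsWithin, eventually_nhdsWithin_of_eventually_nhds hball1]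
      with z h1' h2'
    exact ⟨h1', h2'⟩
  have hGbne : ∀ z : ℂ, z ≠ 0 → ‖z‖ < 1 → G z - b ≠ 0 := by
    intro z hz hz1
    intro h
    have := key z hz hz1
    rw [h, norm_zero] at this
    linarith
  have hqd : ∀ᶠ z in 𝓝[≠] (0 : ℂ), DifferentiableAt ℂ q z := by
    filter_upwards [hev] with z hz
    exact ((diff_at hd hz.1).sub_const b).inv (hGbne z hz.1 hz.2)
  have hqb : IsBoundedUnder (· ≤ ·) (𝓝[≠] (0 : ℂ)) fun z => ‖q z - q 0‖ := by
    refine ⟨ε⁻¹ + ‖q 0‖, eventually_map.2 ?_⟩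
    filter_upwards [hev] with z hz
    have h1' : ‖q z‖ ≤ ε⁻¹ := by
      rw [hq]
      simp only [norm_inv]
      exact inv_anti₀ hε (key z hz.1 hz.2)
    calc ‖q z - q 0‖ ≤ ‖q z‖ + ‖q 0‖ := norm_sub_le _ _
      _ ≤ ε⁻¹ + ‖q 0‖ := by linarith
  have hlim := Complex.tendsto_limUnder_of_differentiable_on_punctured_nhds_of_bounded_under hqd hqb
  set w0 := limUnder (𝓝[≠] (0 : ℂ)) q with hw0def
  by_cases hw0 : w0 = 0
  · right
    rw [hw0] at hlim
    have ht1 : Tendsto (fun z => b * q z + 1) (𝓝[≠] (0 : ℂ)) (𝓝 1) := by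
      have := (tendsto_const_nhds (x := b)).mul hlim
      simpa using this.add (tendsto_const_nhds (x := (1 : ℂ)))
    have ht : Tendsto (fun z => q z * (b * q z + 1)⁻¹) (𝓝[≠] (0 : ℂ)) (𝓝 0) := by
      simpa using hlim.mul (ht1.inv₀ one_ne_zero)
    refine ht.congr' ?_
    filter_upwards [hev] with z hz
    have hne : G z - b ≠ 0 := hGbne z hz.1 hz.2
    have hGz : G z ≠ 0 := hmap hz.1
    have hqz : q z ≠ 0 := inv_ne_zero hne
    have e1 : b * q z + 1 = G z * q z := by
      rw [hq]
      field_simp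
      ring
    rw [e1, mul_inv, mul_comm ((G z)⁻¹) ((q z)⁻¹), ← mul_assoc, mul_inv_cancel₀ hqz, one_mul]
  · left
    refine ⟨b + w0⁻¹, ?_⟩
    have ht : Tendsto (fun z => b + (q z)⁻¹) (𝓝[≠] (0 : ℂ)) (𝓝 (b + w0⁻¹)) :=
      tendsto_const_nhds.add (hlim.inv₀ hw0)
    refine ht.congr' ?_
    filter_upwards [hev] with z hz
    have hne : G z - b ≠ 0 := hGbne z hz.1 hz.2
    rw [hq]
    simp only [inv_inv]
    ring

lemma limit_zero {G : ℂ → ℂ} (hd : DifferentiableOn ℂ G Cstar) (hinj : InjOn G Cstar)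
    (hsurj : SurjOn G Cstar Cstar) {L : ℂ}
    (hL : Tendsto G (𝓝[≠] (0 : ℂ)) (𝓝 L)) : L = 0 := by
  by_contra hL0
  obtain ⟨z0, hz0, hGz0⟩ := hsurj (mem_Cstar hL0)
  have hz0' : z0 ≠ 0 := hz0
  have hz0n : 0 < ‖z0‖ := norm_pos_iff.2 hz0'
  have hρ : 0 < ‖z0‖/2 := by linarith
  obtain ⟨ε, hε, hsub⟩ := ball_sub_image hd hinj hz0' hρ
  have hev1 : ∀ᶠ z in 𝓝[≠] (0 : ℂ), dist (G z) L < ε := (Metric.tendsto_nhds.1 hL) ε hε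
  have hball : ∀ᶠ z in 𝓝 (0 : ℂ), ‖z‖ < ‖z0‖/2 := by
    filter_upwards [Metric.ball_mem_nhds (0 : ℂ) hρ] with z hz
    simpa [dist_zero_right] using hz
  obtain ⟨z1, hdz1, hnz1, hz1ne⟩ :=
    (hev1.and ((eventually_nhdsWithin_of_eventually_nhds hball).and self_mem_nhdsWithin)).exists
  have hmem : G z1 ∈ ball (G z0) ε := by
    rw [hGz0, mem_ball]; exact hdz1
  obtain ⟨w, hw, hGw⟩ := hsub hmem
  have hdw : ‖z0 - w‖ < ‖z0‖/2 := by
    have := mem_ball.1 hw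
    rwa [dist_eq_norm, norm_sub_rev] at this
  have hwn : ‖z0‖/2 < ‖w‖ := by
    have := norm_sub_norm_le z0 w
    linarith
  have hw0 : w ≠ 0 := by
    intro h; rw [h, norm_zero] at hwn; linarith
  have := hinj hw0 hz1ne hGw
  rw [this] at hwn
  linarith

lemma entire_update {f : ℂ → ℂ} (hd : DifferentiableOn ℂ f Cstar)
    (h0 : Tendsto f (𝓝[≠] (0 : ℂ)) (𝓝 0)) :
    Differentiable ℂ (Function.update f 0 0) := by
  have heq : ∀ {z : ℂ}, z ≠ 0 → Function.update f 0 0 z = f z := fun hz =>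
    Function.update_of_ne hz _ _
  have hdiff : ∀ z : ℂ, z ≠ 0 → DifferentiableAt ℂ (Function.update f 0 0) z := by
    intro z hz
    have hev : Function.update f 0 0 =ᶠ[𝓝 z] f := by
      filter_upwards [eventually_ne_nhds hz] with w hw using heq hw
    exact (diff_at hd hz).congr_of_eventuallyEq hev
  intro z
  rcases eq_or_ne z 0 with rfl | hz
  · have h1 : Tendsto (Function.update f 0 0) (𝓝[≠] (0 : ℂ)) (𝓝 0) := by
      refine h0.congr' ?_
      filter_upwards [self_mem_nhdsWithin] with w hw using (heq hw).symm
    have hcont : ContinuousAt (Function.update f 0 0) 0 := by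
      rw [← continuousWithinAt_compl_self]
      show Tendsto (Function.update f 0 0) (𝓝[≠] (0 : ℂ)) (𝓝 (Function.update f 0 0 0))
      rw [Function.update_self]
      exact h1
    refine (Complex.analyticAt_of_differentiable_on_punctured_nhds_of_continuousAt ?_
      hcont).differentiableAt
    filter_upwards [self_mem_nhdsWithin] with w hw using hdiff w hw
  · exact hdiff z hz

lemma not_both_zero {G : ℂ → ℂ} (hd : DifferentiableOn ℂ G Cstar) (hinj : InjOn G Cstar)
    (h0 : Tendsto G (𝓝[≠] (0 : ℂ)) (𝓝 0))
    (hinf : Tendsto (fun z => G z⁻¹) (𝓝[≠] (0 : ℂ)) (𝓝 0)) : False := by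
  have hF := entire_update hd h0
  set F := Function.update G 0 0 with hFdef
  rw [Metric.tendsto_nhdsWithin_nhds] at h0 hinf
  obtain ⟨δ1, hδ1, hb1⟩ := h0 1 one_pos
  obtain ⟨δ2, hδ2, hb2⟩ := hinf 1 one_pos
  set K : Set ℂ := closedBall 0 (δ2⁻¹ + 1) ∩ {z : ℂ | δ1/2 ≤ ‖z‖} with hK
  have hKcomp : IsCompact K :=
    (isCompact_closedBall _ _).inter_right (isClosed_le continuous_const continuous_norm)
  have hKsub : K ⊆ Cstar := by
    intro z hz h0'
    have h : δ1 / 2 ≤ ‖z‖ := hz.2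
    rw [h0', norm_zero] at h
    linarith
  obtain ⟨C, hC⟩ := hKcomp.exists_bound_of_continuousOn (hd.continuousOn.mono hKsub)
  have hbound : ∀ z : ℂ, ‖F z‖ ≤ max C 1 := by
    intro z
    rcases eq_or_ne z 0 with rfl | hz
    · rw [hFdef, Function.update_self, norm_zero]
      exact le_trans zero_le_one (le_max_right _ _)
    · have hFz : F z = G z := Function.update_of_ne hz _ _
      rw [hFz]
      rcases lt_or_ge ‖z‖ δ1 with h | h
      · have := hb1 (show z ∈ ({0}ᶜ : Set ℂ) from hz) (by rwa [dist_zero_right])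
        rw [dist_zero_right] at this
        exact this.le.trans (le_max_right _ _)
      · rcases le_or_gt ‖z‖ δ2⁻¹ with h2 | h2
        · have hzK : z ∈ K := by
            constructor
            · rw [mem_closedBall, dist_zero_right]; linarith
            · simp only [mem_setOf_eq]; linarith
          exact (hC z hzK).trans (le_max_left _ _)
        · have hzinv : (z⁻¹ : ℂ) ∈ ({0}ᶜ : Set ℂ) := inv_ne_zero hz
          have hlt : dist (z⁻¹ : ℂ) 0 < δ2 := by
            rw [dist_zero_right, norm_inv]
            have := inv_strictAnti₀ (inv_pos.2 hδ2) h2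
            rwa [inv_inv] at this
          have := hb2 hzinv hlt
          rw [dist_zero_right, inv_inv] at this
          exact this.le.trans (le_max_right _ _)
  have hb : Bornology.IsBounded (Set.range F) := by
    refine isBounded_iff_forall_norm_le.2 ⟨max C 1, ?_⟩
    rintro _ ⟨x, rfl⟩
    exact hbound x
  have h12 := hF.apply_eq_apply_of_bounded hb 1 2
  have e1 : F 1 = G 1 := Function.update_of_ne one_ne_zero _ _
  have e2 : F 2 = G 2 := Function.update_of_ne two_ne_zero _ _
  have : (1 : ℂ) = 2 := hinj one_ne_zero two_ne_zero (by rw [← e1, ← e2, h12])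
  norm_num at this

lemma dslope_entire {f : ℂ → ℂ} (hf : Differentiable ℂ f) : Differentiable ℂ (dslope f 0) := by
  intro z
  rcases eq_or_ne z 0 with rfl | hz
  · refine (Complex.analyticAt_of_differentiable_on_punctured_nhds_of_continuousAt ?_
      (continuousAt_dslope_same.2 (hf 0))).differentiableAt
    filter_upwards [self_mem_nhdsWithin] with w hw
    exact (differentiableAt_dslope_of_ne hw).2 (hf w)
  · exact (differentiableAt_dslope_of_ne hz).2 (hf z)

lemma poly_of_growth : ∀ (n : ℕ) (f : ℂ → ℂ), Differentiable ℂ f →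
    ∀ C R : ℝ, (∀ z : ℂ, R ≤ ‖z‖ → ‖f z‖ ≤ C * ‖z‖ ^ n) →
    ∃ a : ℕ → ℂ, ∀ z, f z = ∑ i ∈ Finset.range (n + 1), a i * z ^ i := by
  intro n
  induction n with
  | zero =>
    intro f hf C R hbd
    obtain ⟨C2, hC2⟩ := (isCompact_closedBall (0 : ℂ) |R|).exists_bound_of_continuousOn
      hf.continuous.continuousOn
    have hb : Bornology.IsBounded (Set.range f) := by
      refine isBounded_iff_forall_norm_le.2 ⟨max C C2, ?_⟩
      rintro _ ⟨z, rfl⟩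
      rcases le_or_gt R ‖z‖ with h | h
      · have := hbd z h
        rw [pow_zero, mul_one] at this
        exact this.trans (le_max_left _ _)
      · have hz : z ∈ closedBall (0 : ℂ) |R| := by
          rw [mem_closedBall, dist_zero_right]
          exact le_trans h.le (le_abs_self R)
        exact (hC2 z hz).trans (le_max_right _ _)
    refine ⟨fun _ => f 0, fun z => ?_⟩
    rw [Finset.sum_range_one, pow_zero, mul_one]
    exact hf.apply_eq_apply_of_bounded hb z 0
  | succ n ih =>
    intro f hf C R hbd
    set g := dslope f 0 with hg
    have hgd : Differentiable ℂ g := dslope_entire hf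
    have hfg : ∀ z : ℂ, f z = f 0 + z * g z := by
      intro z
      have h := sub_smul_dslope f 0 z
      rw [sub_zero, smul_eq_mul] at h
      rw [hg]
      linear_combination -h
    have hgb : ∀ z : ℂ, max R 1 ≤ ‖z‖ → ‖g z‖ ≤ (max C 0 + ‖f 0‖) * ‖z‖ ^ n := by
      intro z hz
      have hz1 : (1 : ℝ) ≤ ‖z‖ := le_trans (le_max_right _ _) hz
      have hz0 : z ≠ 0 := by
        intro h; rw [h, norm_zero] at hz1; linarith
      have hge : g z = (f z - f 0) / z := by
        rw [hg, dslope_of_ne f hz0, slope_def_field, sub_zero]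
      rw [hge, norm_div]
      have h1 := hbd z (le_trans (le_max_left _ _) hz)
      have h2 : C * ‖z‖ ^ (n+1) ≤ max C 0 * ‖z‖ ^ (n+1) :=
        mul_le_mul_of_nonneg_right (le_max_left _ _) (by positivity)
      have hfz : ‖f z - f 0‖ ≤ max C 0 * ‖z‖ ^ (n+1) + ‖f 0‖ := by
        calc ‖f z - f 0‖ ≤ ‖f z‖ + ‖f 0‖ := norm_sub_le _ _
          _ ≤ max C 0 * ‖z‖ ^ (n+1) + ‖f 0‖ := by linarith
      have hznorm : (0 : ℝ) < ‖z‖ := by linarith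
      rw [div_le_iff₀ hznorm]
      have hXe : ‖z‖ ^ (n+1) = ‖z‖ ^ n * ‖z‖ := pow_succ _ _
      have h1X : (1 : ℝ) ≤ ‖z‖ ^ (n+1) := by
        calc (1 : ℝ) = 1 ^ (n+1) := (one_pow _).symm
          _ ≤ ‖z‖ ^ (n+1) := pow_le_pow_left₀ zero_le_one hz1 _
      have hf0 : ‖f 0‖ ≤ ‖f 0‖ * ‖z‖ ^ (n+1) := le_mul_of_one_le_right (norm_nonneg _) h1X
      have hrhs : (max C 0 + ‖f 0‖) * ‖z‖ ^ n * ‖z‖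
          = max C 0 * ‖z‖ ^ (n+1) + ‖f 0‖ * ‖z‖ ^ (n+1) := by
        rw [hXe]; ring
      rw [hrhs]
      linarith
    obtain ⟨b, hb⟩ := ih g hgd (max C 0 + ‖f 0‖) (max R 1) hgb
    refine ⟨fun i => if i = 0 then f 0 else b (i - 1), fun z => ?_⟩
    rw [Finset.sum_range_succ']
    have hterm : ∀ i ∈ Finset.range (n + 1),
        (if i + 1 = 0 then f 0 else b (i + 1 - 1)) * z ^ (i + 1) = z * (b i * z ^ i) := by
      intro i _
      simp only [Nat.succ_ne_zero, if_false, Nat.add_sub_cancel]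
      ring
    have h00 : ((fun i => if i = 0 then f 0 else b (i - 1)) 0) = f 0 := by norm_num
    rw [Finset.sum_congr rfl hterm, ← Finset.mul_sum, ← hb z, hfg z, h00, pow_zero, mul_one]
    ring

lemma eq_linear {G : ℂ → ℂ} (hd : DifferentiableOn ℂ G Cstar) (hmap : MapsTo G Cstar Cstar)
    (hinj : InjOn G Cstar) (h0 : Tendsto G (𝓝[≠] (0 : ℂ)) (𝓝 0))
    (hinf : Tendsto (fun z => (G z⁻¹)⁻¹) (𝓝[≠] (0 : ℂ)) (𝓝 0)) :
    ∃ a : ℂ, a ≠ 0 ∧ ∀ z : ℂ, z ≠ 0 → G z = a * z := by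
  set F := Function.update G 0 0 with hFdef
  have hFd : Differentiable ℂ F := entire_update hd h0
  have hFne : ∀ {z : ℂ}, z ≠ 0 → F z = G z := fun hz => Function.update_of_ne hz _ _
  have hF0 : F 0 = 0 := Function.update_self _ _ _
  have hGne : ∀ {z : ℂ}, z ≠ 0 → G z ≠ 0 := fun hz => hmap hz
  set M : ℂ → ℂ := fun z => (G z⁻¹)⁻¹ with hMdef
  have hMd : DifferentiableOn ℂ M Cstar := by
    intro z hz
    have hz' : z ≠ 0 := hz
    have h1 : DifferentiableAt ℂ (fun w : ℂ => G w⁻¹) z :=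
      (diff_at hd (inv_ne_zero hz')).comp z (differentiableAt_id.inv hz')
    exact (h1.inv (hGne (inv_ne_zero hz'))).differentiableWithinAt
  have hM0 : Tendsto M (𝓝[≠] (0 : ℂ)) (𝓝 0) := hinf
  set N := Function.update M 0 0 with hNdef
  have hNd : Differentiable ℂ N := entire_update hMd hM0
  have hNne : ∀ {z : ℂ}, z ≠ 0 → N z = M z := fun hz => Function.update_of_ne hz _ _
  have hNan : AnalyticAt ℂ N 0 := hNd.analyticAt 0
  have hMne : ∀ {z : ℂ}, z ≠ 0 → M z ≠ 0 := fun hz => inv_ne_zero (hGne (inv_ne_zero hz))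
  have hnotzero : ¬ ∀ᶠ z in 𝓝 (0 : ℂ), N z = 0 := by
    intro h
    have h' : ∀ᶠ z in 𝓝[≠] (0 : ℂ), N z = 0 := h.filter_mono nhdsWithin_le_nhds
    obtain ⟨z, hz0, hz⟩ := (h'.and self_mem_nhdsWithin).exists
    exact hMne hz (by rw [← hNne hz]; exact hz0)
  obtain ⟨n, u, huan, hu0, hueq⟩ := hNan.exists_eventuallyEq_pow_smul_nonzero_iff.2 hnotzero
  have hn0 : n ≠ 0 := by
    intro h
    rw [h] at hueq
    have := hueq.self_of_nhds
    rw [pow_zero, one_smul, hNdef, Function.update_self] at this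
    exact hu0 this.symm
  have hu0pos : 0 < ‖u 0‖ := norm_pos_iff.2 hu0
  have hu2 : ∀ᶠ z in 𝓝 (0 : ℂ), ‖u 0‖/2 ≤ ‖u z‖ := by
    have hcont : ContinuousAt u 0 := huan.continuousAt
    have hev : ∀ᶠ z in 𝓝 (0 : ℂ), dist (u z) (u 0) < ‖u 0‖/2 :=
      (Metric.tendsto_nhds.1 hcont) _ (by linarith)
    filter_upwards [hev] with z hzv
    rw [dist_eq_norm] at hzv
    have h1 := norm_sub_norm_le (u 0) (u z)
    rw [norm_sub_rev] at h1
    linarith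
  obtain ⟨δ, hδpos, hδ⟩ := Metric.eventually_nhds_iff.1 (hueq.and hu2)
  have hgrow : ∀ w : ℂ, δ⁻¹ + 1 ≤ ‖w‖ → ‖F w‖ ≤ (2 / ‖u 0‖) * ‖w‖ ^ n := by
    intro w hw
    have hδipos : (0 : ℝ) < δ⁻¹ := inv_pos.2 hδpos
    have hwpos : (0 : ℝ) < ‖w‖ := by linarith
    have hw0 : w ≠ 0 := norm_pos_iff.1 hwpos
    have hy0 : (w⁻¹ : ℂ) ≠ 0 := inv_ne_zero hw0
    have hzdist : dist (w⁻¹ : ℂ) 0 < δ := by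
      rw [dist_zero_right, norm_inv]
      have h1 : δ⁻¹ < ‖w‖ := by linarith
      have := inv_strictAnti₀ hδipos h1
      rwa [inv_inv] at this
    obtain ⟨hNeq, hul⟩ := hδ hzdist
    have hNy : N w⁻¹ = (F w)⁻¹ := by
      rw [hNne hy0, hMdef]
      simp only [inv_inv]
      rw [hFne hw0]
    have hFw : F w ≠ 0 := by rw [hFne hw0]; exact hGne hw0
    have hFwpos : 0 < ‖F w‖ := norm_pos_iff.2 hFw
    have hNlow : ‖u 0‖/2 * (‖w‖ ^ n)⁻¹ ≤ ‖F w‖⁻¹ := by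
      rw [← norm_inv, ← hNy, hNeq, sub_zero]
      rw [smul_eq_mul, norm_mul, norm_pow, norm_inv, inv_pow]
      calc ‖u 0‖/2 * (‖w‖ ^ n)⁻¹ = (‖w‖ ^ n)⁻¹ * (‖u 0‖/2) := by ring
        _ ≤ (‖w‖ ^ n)⁻¹ * ‖u (w⁻¹)‖ := by
            apply mul_le_mul_of_nonneg_left hul (by positivity)
        _ = (‖w‖ ^ n)⁻¹ * ‖u w⁻¹‖ := rfl
    have h2 : ‖F w‖ ≤ (‖u 0‖/2 * (‖w‖ ^ n)⁻¹)⁻¹ := by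
      rw [← inv_inv ‖F w‖]
      exact inv_anti₀ (by positivity) hNlow
    calc ‖F w‖ ≤ (‖u 0‖/2 * (‖w‖ ^ n)⁻¹)⁻¹ := h2
      _ = (2 / ‖u 0‖) * ‖w‖ ^ n := by
          rw [mul_inv, inv_inv]
          congr 1
          field_simp
  obtain ⟨a, ha⟩ := poly_of_growth n F hFd (2 / ‖u 0‖) (δ⁻¹ + 1) hgrow
  set P : Polynomial ℂ := ∑ i ∈ Finset.range (n + 1), Polynomial.C (a i) * Polynomial.X ^ i
    with hP
  have hPeval : ∀ z : ℂ, P.eval z = F z := by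
    intro z
    rw [ha z, hP]
    simp [Polynomial.eval_finset_sum]
  have hF1 : F 1 = G 1 := hFne one_ne_zero
  have hG1 : G 1 ≠ 0 := hGne one_ne_zero
  have hPne : P ≠ 0 := by
    intro h
    have := hPeval 1
    rw [h, Polynomial.eval_zero, hF1] at this
    exact hG1 this.symm
  have hroots : ∀ r ∈ P.roots, r = 0 := by
    intro r hr
    have hr0 : P.eval r = 0 := (Polynomial.mem_roots'.1 hr).2
    by_contra hrne
    have hFr : F r = 0 := by rw [← hPeval r]; exact hr0
    exact hGne hrne (by rw [← hFne hrne]; exact hFr)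
  have hsplit := (IsAlgClosed.splits P).eq_prod_roots
  set m := Multiset.card P.roots with hm
  have hrootsrep : P.roots = Multiset.replicate m 0 :=
    Multiset.eq_replicate.2 ⟨rfl, hroots⟩
  have hPform : ∀ z : ℂ, F z = P.leadingCoeff * z ^ m := by
    intro z
    rw [← hPeval z]
    conv_lhs => rw [hsplit]
    rw [hrootsrep, Multiset.map_replicate, Multiset.prod_replicate]
    simp [Polynomial.eval_pow, Polynomial.eval_mul]
  have hlc : P.leadingCoeff ≠ 0 := Polynomial.leadingCoeff_ne_zero.2 hPne
  have hm0 : m ≠ 0 := by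
    intro h
    have := hPform 0
    rw [h, pow_zero, mul_one, hF0] at this
    exact hlc this.symm
  have hm1 : m = 1 := by
    by_contra hne1
    have hm2 : 2 ≤ m := by omega
    set ζ : ℂ := Complex.exp (2 * π * I / m) with hζ
    have hmC : (m : ℂ) ≠ 0 := Nat.cast_ne_zero.2 hm0
    have hζm : ζ ^ m = 1 := by
      rw [hζ, ← Complex.exp_nat_mul, mul_div_cancel₀ _ hmC]
      exact Complex.exp_two_pi_mul_I
    have hζ1 : ζ ≠ 1 := by
      rw [hζ, Ne, Complex.exp_eq_one_iff]
      rintro ⟨k, hk⟩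
      have h2πI : (2 * (π : ℂ) * I) ≠ 0 :=
        mul_ne_zero (mul_ne_zero two_ne_zero (Complex.ofReal_ne_zero.2 Real.pi_ne_zero))
          Complex.I_ne_zero
      have hmk : (m : ℂ) * k = 1 := by
        have h' : 2 * (π : ℂ) * I = k * (2 * π * I) * m := by
          field_simp at hk
          linear_combination (2 * (π : ℂ) * I) * hk
        have h'' : ((m : ℂ) * k) * (2 * (π : ℂ) * I) = 1 * (2 * (π : ℂ) * I) := by
          linear_combination -h'
        exact mul_right_cancel₀ h2πI h''
      have hmkZ : (m : ℤ) * k = 1 := by exact_mod_cast hmk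
      have : (m : ℤ) ≤ 1 := Int.le_of_dvd one_pos ⟨k, hmkZ.symm⟩
      omega
    have hζ0 : ζ ≠ 0 := Complex.exp_ne_zero _
    have : G ζ = G 1 := by
      rw [← hFne hζ0, ← hFne one_ne_zero, hPform, hPform, hζm, one_pow]
    exact hζ1 (hinj hζ0 one_ne_zero this)
  refine ⟨P.leadingCoeff, hlc, fun z hz => ?_⟩
  rw [← hFne hz, hPform, hm1, pow_one]

lemma linear_of_zero_limit {G : ℂ → ℂ} (hd : DifferentiableOn ℂ G Cstar)
    (hmap : MapsTo G Cstar Cstar) (hinj : InjOn G Cstar) (hsurj : SurjOn G Cstar Cstar)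
    (h0 : Tendsto G (𝓝[≠] (0 : ℂ)) (𝓝 0)) :
    ∃ a : ℂ, a ≠ 0 ∧ ∀ z : ℂ, z ≠ 0 → G z = a * z := by
  set Gi : ℂ → ℂ := fun z => G z⁻¹ with hGi
  have hdi : DifferentiableOn ℂ Gi Cstar := by
    intro z hz
    have hz' : z ≠ 0 := hz
    exact ((diff_at hd (inv_ne_zero hz')).comp z
      (differentiableAt_id.inv hz')).differentiableWithinAt
  have hmapi : MapsTo Gi Cstar Cstar := fun z hz => hmap (inv_ne_zero hz)
  have hinji : InjOn Gi Cstar := by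
    intro x hx y hy hxy
    have := hinj (mem_Cstar (inv_ne_zero hx)) (mem_Cstar (inv_ne_zero hy)) hxy
    exact inv_injective this
  have hsurji : SurjOn Gi Cstar Cstar := by
    intro v hv
    obtain ⟨z, hz, hGz⟩ := hsurj hv
    refine ⟨z⁻¹, mem_Cstar (inv_ne_zero hz), ?_⟩
    show G (z⁻¹)⁻¹ = v
    rw [inv_inv]
    exact hGz
  rcases dichotomy hdi hmapi hinji with ⟨L, hL⟩ | hILinf
  · exfalso
    have hL0 : L = 0 := limit_zero hdi hinji hsurji hL
    rw [hL0] at hL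
    exact not_both_zero hd hinj h0 hL
  · exact eq_linear hd hmap hinj h0 hILinf

lemma autCstar {G : ℂ → ℂ} (hd : DifferentiableOn ℂ G Cstar) (hmap : MapsTo G Cstar Cstar)
    (hinj : InjOn G Cstar) (hsurj : SurjOn G Cstar Cstar) :
    ∃ a : ℂ, a ≠ 0 ∧ ((∀ z : ℂ, z ≠ 0 → G z = a * z) ∨ (∀ z : ℂ, z ≠ 0 → G z = a * z⁻¹)) := by
  rcases dichotomy hd hmap hinj with ⟨L, hL⟩ | hIinf
  · have hL0 := limit_zero hd hinj hsurj hL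
    rw [hL0] at hL
    obtain ⟨a, ha, h⟩ := linear_of_zero_limit hd hmap hinj hsurj hL
    exact ⟨a, ha, Or.inl h⟩
  · set Gv : ℂ → ℂ := fun z => (G z)⁻¹ with hGv
    have hdv : DifferentiableOn ℂ Gv Cstar := fun z hz =>
      ((diff_at hd hz).inv (hmap hz)).differentiableWithinAt
    have hmapv : MapsTo Gv Cstar Cstar := fun z hz => inv_ne_zero (hmap hz)
    have hinjv : InjOn Gv Cstar := fun x hx y hy hxy => hinj hx hy (inv_injective hxy)
    have hsurjv : SurjOn Gv Cstar Cstar := by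
      intro v hv
      have hv' : (v : ℂ) ≠ 0 := hv
      obtain ⟨z, hz, hGz⟩ := hsurj (mem_Cstar (inv_ne_zero hv'))
      refine ⟨z, hz, ?_⟩
      show (G z)⁻¹ = v
      rw [hGz, inv_inv]
    obtain ⟨a, ha, h⟩ := linear_of_zero_limit hdv hmapv hinjv hsurjv hIinf
    refine ⟨a⁻¹, inv_ne_zero ha, Or.inr fun z hz => ?_⟩
    have hGvz : (G z)⁻¹ = a * z := h z hz
    rw [← inv_inv (G z), hGvz, mul_inv]

lemma phi_not_in_four {φ : ℂ → ℂ} (hinj : InjOn φ Cstar) (x1 x2 x3 x4 : ℂ)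
    (h : ∀ z : ℂ, z ≠ 0 → φ z = x1 ∨ φ z = x2 ∨ φ z = x3 ∨ φ z = x4) : False := by
  set T : Finset ℂ := {1, 2, 3, 4, 5} with hT
  have hTsub : ∀ z ∈ T, z ≠ (0 : ℂ) := by
    intro z hz
    simp only [hT, Finset.mem_insert, Finset.mem_singleton] at hz
    rcases hz with rfl | rfl | rfl | rfl | rfl <;> norm_num
  have hcardT : T.card = 5 := by
    rw [hT]
    rw [Finset.card_insert_of_notMem (by norm_num), Finset.card_insert_of_notMem (by norm_num),
      Finset.card_insert_of_notMem (by norm_num), Finset.card_insert_of_notMem (by norm_num),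
      Finset.card_singleton]
  set S : Finset ℂ := {x1, x2, x3, x4} with hS
  have himg : T.image φ ⊆ S := by
    intro y hy
    obtain ⟨z, hzT, rfl⟩ := Finset.mem_image.1 hy
    rcases h z (hTsub z hzT) with h' | h' | h' | h' <;> simp [hS, h']
  have hcard : (T.image φ).card = 5 := by
    rw [Finset.card_image_of_injOn, hcardT]
    intro x hx y hy hxy
    exact hinj (hTsub x (by exact_mod_cast hx)) (hTsub y (by exact_mod_cast hy)) hxy
  have hS4 : S.card ≤ 4 := by
    rw [hS]
    refine le_trans (Finset.card_insert_le _ _) ?_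
    have h2 : ({x2, x3, x4} : Finset ℂ).card ≤ 3 := by
      refine le_trans (Finset.card_insert_le _ _) ?_
      have h3 : ({x3, x4} : Finset ℂ).card ≤ 2 := by
        refine le_trans (Finset.card_insert_le _ _) ?_
        simp
      omega
    omega
  have := Finset.card_le_card himg
  omega

end Aux

open Filter Topology Metric Function Real

/-- if a conjugating mapping `φ` of `ℂ*` with `φ(1) = 1` conjugates
`exp` to `z ↦ exp(c z)`, then its extension by `φ̃(0) = 0` is additive. -/
theorem stmt4 (φ : ℂ → ℂ) (hφ : ConjugatingCstar φ) (h1 : φ 1 = 1)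
    (c : ℂ) (hc : c ≠ 0)
    (hexp : ∀ w ∈ Cstar, φ (Complex.exp w) = Complex.exp (c * φ w)) :
    ∀ a b : ℂ, extZero φ (a + b) = extZero φ a + extZero φ b := by
  obtain ⟨hbij, hconj⟩ := hφ
  have hmapφ : Set.MapsTo φ Cstar Cstar := hbij.mapsTo
  have hinjφ : Set.InjOn φ Cstar := hbij.injOn
  have hsurjφ : Set.SurjOn φ Cstar Cstar := hbij.surjOn
  have hφne : ∀ {z : ℂ}, z ≠ 0 → φ z ≠ 0 := fun hz => hmapφ hz
  -- Step 1: multiplicative alternative from the conjugating property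
  have alt : ∀ t : ℂ, t ≠ 0 → (∀ z : ℂ, z ≠ 0 → φ (t * z) = φ t * φ z) ∨
      (∀ z : ℂ, z ≠ 0 → φ (t * z) = φ t * (φ z)⁻¹) := by
    intro t ht
    obtain ⟨g, ⟨hgd, hgm⟩, hgc⟩ := hconj (fun z => t * z)
      ⟨(differentiable_id.const_mul t).differentiableOn, fun z hz => mul_ne_zero ht hz⟩
    have hginj : Set.InjOn g Cstar := by
      intro u hu v hv huv
      obtain ⟨zu, hzu, rfl⟩ := hsurjφ hu
      obtain ⟨zv, hzv, rfl⟩ := hsurjφ hv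
      rw [hgc zu hzu, hgc zv hzv] at huv
      have h' := hinjφ (mem_Cstar (mul_ne_zero ht hzu)) (mem_Cstar (mul_ne_zero ht hzv)) huv
      have : zu = zv := mul_left_cancel₀ ht h'
      rw [this]
    have hgsurj : Set.SurjOn g Cstar Cstar := by
      intro v hv
      obtain ⟨y, hy, hyv⟩ := hsurjφ hv
      have hy' : (y : ℂ) ≠ 0 := hy
      refine ⟨φ (t⁻¹ * y), mem_Cstar (hφne (mul_ne_zero (inv_ne_zero ht) hy')), ?_⟩
      rw [hgc _ (mem_Cstar (mul_ne_zero (inv_ne_zero ht) hy'))]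
      rw [show t * (t⁻¹ * y) = y by field_simp]
      exact hyv
    obtain ⟨a, ha, hcase⟩ := autCstar hgd hgm hginj hgsurj
    have hg1 : g 1 = φ t := by
      have := hgc 1 (mem_Cstar one_ne_zero)
      rwa [h1, mul_one] at this
    rcases hcase with hl | hl
    · left
      have hat : a = φ t := by
        have := hl 1 one_ne_zero
        rw [mul_one] at this
        rw [← hg1, this]
      intro z hz
      rw [← hgc z (mem_Cstar hz), hl (φ z) (hφne hz), hat]
    · right
      have hat : a = φ t := by
        have := hl 1 one_ne_zero
        rw [inv_one, mul_one] at this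
        rw [← hg1, this]
      intro z hz
      rw [← hgc z (mem_Cstar hz), hl (φ z) (hφne hz), hat]
  -- Step 2: multiplicativity
  have hmul : ∀ t z : ℂ, t ≠ 0 → z ≠ 0 → φ (t * z) = φ t * φ z := by
    intro t z ht hz
    rcases alt t ht with h | h
    · exact h z hz
    · exfalso
      have hφt : φ t ≠ 0 := hφne ht
      have hconstraint : ∀ s : ℂ, s ≠ 0 → φ s = 1 ∨ φ s = -1 ∨ φ s = φ t ∨ φ s = -φ t := by
        intro s hs
        have hφs : φ s ≠ 0 := hφne hs
        rcases alt s hs with h2 | h2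
        · -- φ(s t) = φ s φ t and φ(t s) = φ t (φ s)⁻¹
          have e1 := h2 t ht
          have e2 := h s hs
          rw [mul_comm s t, e2] at e1
          -- e1 : φ t * (φ s)⁻¹ = φ s * φ t
          have e3 : φ t * (φ s)⁻¹ * φ s = φ s * φ t * φ s := by rw [e1]
          rw [mul_assoc, inv_mul_cancel₀ hφs, mul_one] at e3
          have e4 : φ t * (φ s * φ s) = φ t * 1 := by
            rw [mul_one]
            linear_combination -e3
          have hss : φ s * φ s = 1 := mul_left_cancel₀ hφt e4
          rcases mul_self_eq_one_iff.1 hss with h' | h'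
          · exact Or.inl h'
          · exact Or.inr (Or.inl h')
        · have e1 := h2 t ht
          have e2 := h s hs
          rw [mul_comm s t, e2] at e1
          -- e1 : φ t * (φ s)⁻¹ = φ s * (φ t)⁻¹
          have e3 : φ t * (φ s)⁻¹ * (φ s * φ t) = φ s * (φ t)⁻¹ * (φ s * φ t) := by rw [e1]
          rw [show φ t * (φ s)⁻¹ * (φ s * φ t) = φ t * ((φ s)⁻¹ * φ s) * φ t by ring] at e3
          rw [show φ s * (φ t)⁻¹ * (φ s * φ t) = φ s * ((φ t)⁻¹ * φ t) * φ s by ring] at e3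
          rw [inv_mul_cancel₀ hφs, inv_mul_cancel₀ hφt, mul_one, mul_one] at e3
          have hss : φ s * φ s = φ t * φ t := e3.symm
          rcases mul_self_eq_mul_self_iff.1 hss with h' | h'
          · exact Or.inr (Or.inr (Or.inl h'))
          · exact Or.inr (Or.inr (Or.inr h'))
      exact phi_not_in_four hinjφ 1 (-1) (φ t) (-φ t) hconstraint
  -- Step 3: φ(-1) = -1
  have hneg1 : φ (-1) = -1 := by
    have h2 : φ (-1) * φ (-1) = 1 := by
      rw [← hmul (-1) (-1) (by norm_num) (by norm_num)]
      norm_num [h1]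
    rcases mul_self_eq_one_iff.1 h2 with h' | h'
    · exfalso
      have heq : φ (-1) = φ 1 := by rw [h', h1]
      have := hinjφ (mem_Cstar (show (-1 : ℂ) ≠ 0 by norm_num))
        (mem_Cstar (show (1 : ℂ) ≠ 0 by norm_num)) heq
      norm_num at this
    · exact h'
  -- Step 4: φ(1+s) = 1 + φ(s)
  have haddone : ∀ s : ℂ, s ≠ 0 → s ≠ -1 → φ (1 + s) = 1 + φ s := by
    intro s hs hs1
    have h1s : (1 : ℂ) + s ≠ 0 := fun h => hs1 (by linear_combination h)
    by_contra hne
    set K := c * (φ (1 + s) - 1 - φ s) with hK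
    have hKne : K ≠ 0 := mul_ne_zero hc (fun h => hne (by linear_combination h))
    have hkey : ∀ y : ℂ, y ≠ 0 → ∃ k : ℤ, K * y = k * (2 * π * I) := by
      intro y hy
      obtain ⟨w, hw, hφw⟩ := hsurjφ (mem_Cstar hy)
      have hw' : (w : ℂ) ≠ 0 := hw
      have hsw : s * w ≠ 0 := mul_ne_zero hs hw'
      have h1sw : (1 + s) * w ≠ 0 := mul_ne_zero h1s hw'
      have e1 : Complex.exp (c * φ ((1 + s) * w)) = Complex.exp (c * φ w + c * φ (s * w)) := by
        rw [← hexp _ (mem_Cstar h1sw)]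
        rw [show (1 + s) * w = w + s * w by ring, Complex.exp_add]
        rw [hmul _ _ (Complex.exp_ne_zero w) (Complex.exp_ne_zero (s * w))]
        rw [hexp w (mem_Cstar hw'), hexp (s * w) (mem_Cstar hsw), ← Complex.exp_add]
      obtain ⟨k, hk⟩ := Complex.exp_eq_exp_iff_exists_int.1 e1
      refine ⟨k, ?_⟩
      rw [hmul (1 + s) w h1s hw', hmul s w hs hw'] at hk
      rw [hK, ← hφw]
      linear_combination hk
    have hπI : (π : ℂ) * I ≠ 0 :=
      mul_ne_zero (Complex.ofReal_ne_zero.2 Real.pi_ne_zero) Complex.I_ne_zero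
    obtain ⟨k, hk⟩ := hkey ((π * I) / K) (div_ne_zero hπI hKne)
    rw [mul_div_cancel₀ _ hKne] at hk
    have h12 : (1 : ℂ) = 2 * k := by
      apply mul_right_cancel₀ hπI
      rw [one_mul]
      linear_combination hk
    have h12' : (1 : ℤ) = 2 * k := by exact_mod_cast h12
    omega
  -- Step 5: conclusion
  intro a b
  by_cases ha : a = 0
  · simp [extZero, ha]
  by_cases hb : b = 0
  · simp [extZero, hb]
  by_cases hab : a + b = 0
  · have hb' : b = -a := by linear_combination hab
    have hnegφ : φ (-a) = -φ a := by
      rw [show -a = (-1 : ℂ) * a by ring, hmul (-1) a (by norm_num) ha, hneg1]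
      ring
    simp only [extZero, if_pos hab, if_neg ha, if_neg hb]
    rw [hb', hnegφ]
    ring
  · have hba : b / a ≠ 0 := div_ne_zero hb ha
    have hba1 : b / a ≠ -1 := by
      intro h
      apply hab
      have : b = -a := by
        field_simp at h
        linear_combination h
      rw [this]; ring
    have h1ba : (1 : ℂ) + b / a ≠ 0 := by
      intro h
      apply hba1
      linear_combination h
    have key : φ (a + b) = φ a + φ b := by
      have e1 : a + b = a * (1 + b / a) := by field_simp
      rw [e1, hmul a (1 + b / a) ha h1ba, haddone _ hba hba1, mul_add, mul_one]
      congr 1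
      rw [← hmul a (b / a) ha hba]
      congr 1
      field_simp
    simp only [extZero, if_neg hab, if_neg ha, if_neg hb]
    exact key

end
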